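/- arXiv:2106.02661 — 3 statements merged into one kernel-verified Lean document; each statement's English description precedes it below -/
import Mathlib

section
/- Under the stated setting, the sequence (x_n)_{n∈ℕ} generated by the iteration is bounded. -/
open Filter Topology RealInnerProductSpace

/-- A set-valued operator `M : H → 2^H` is monotone. -/
def IsMonotoneOp {H : Type*} [NormedAddCommGroup H] [InnerProductSpace ℝ H]
    (M : H → Set H) : Prop :=
  ∀ x y u v, u ∈ M x → v ∈ M y → 0 ≤ ⟪x - y, u - v⟫

/-- A set-valued operator is maximally monotone if it is monotone and its graph is not
properly contained in the graph of another monotone operator. -/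
def IsMaximalMonotone {H : Type*} [NormedAddCommGroup H] [InnerProductSpace ℝ H]
    (M : H → Set H) : Prop :=
  IsMonotoneOp M ∧
    ∀ M' : H → Set H, IsMonotoneOp M' → (∀ x, M x ⊆ M' x) → ∀ x, M' x ⊆ M x

/-- Fact 1(i⁻): the sequence `(x_n)` produced by the warped proximal iteration is bounded. -/
theorem warped_proximal_bounded
    {H : Type*} [NormedAddCommGroup H] [InnerProductSpace ℝ H] [CompleteSpace H]
    (M : H → Set H) (hM : IsMaximalMonotone M) (hzer : ∃ z, (0 : H) ∈ M z)
    (ε α β : ℝ) (hε : ε ∈ Set.Ioo (0 : ℝ) 1) (hα : 0 < α) (hαβ : α ≤ β)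
    (K : ℕ → H → H)
    (hKstrong : ∀ n x y, α * ‖x - y‖ ^ 2 ≤ ⟪x - y, K n x - K n y⟫)
    (hKlip : ∀ n x y, ‖K n x - K n y‖ ≤ β * ‖x - y‖)
    (lam : ℕ → ℝ) (hlam : ∀ n, lam n ∈ Set.Icc ε (2 - ε))
    (x xt y ystar : ℕ → H)
    (hy : ∀ n, K n (xt n) - K n (y n) ∈ M (y n))
    (hystar : ∀ n, ystar n = K n (xt n) - K n (y n))
    (hupd_pos : ∀ n, 0 < ⟪x n - y n, ystar n⟫ →
      x (n + 1) = x n - ((lam n * ⟪x n - y n, ystar n⟫) / ‖ystar n‖ ^ 2) • ystar n)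
    (hupd_neg : ∀ n, ¬ 0 < ⟪x n - y n, ystar n⟫ → x (n + 1) = x n) :
    Bornology.IsBounded (Set.range x) := by
  obtain ⟨z, hz⟩ := hzer
  have key : ∀ n, ‖x (n + 1) - z‖ ≤ ‖x n - z‖ := by
    intro n
    by_cases hc : 0 < ⟪x n - y n, ystar n⟫
    · have hyz : 0 ≤ ⟪y n - z, ystar n⟫ := by
        have := hM.1 (y n) z (ystar n) 0 (by rw [hystar]; exact hy n) hz
        simpa using this
      have hne : ystar n ≠ 0 := by
        intro h; rw [h] at hc; simp at hc
      have hns : 0 < ‖ystar n‖ ^ 2 := pow_pos (norm_pos_iff.mpr hne) 2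
      set c := ⟪x n - y n, ystar n⟫ with hcdef
      set t := lam n * c / ‖ystar n‖ ^ 2 with ht
      have hlam0 : 0 < lam n := lt_of_lt_of_le hε.1 (hlam n).1
      have hlam2 : lam n ≤ 2 := by
        have := (hlam n).2; linarith [hε.1]
      have htpos : 0 ≤ t := by
        rw [ht]; positivity
      have hkey : t * ‖ystar n‖ ^ 2 = lam n * c := by
        rw [ht]; field_simp
      have hinner : c ≤ ⟪x n - z, ystar n⟫ := by
        have hsum : ⟪x n - z, ystar n⟫ = c + ⟪y n - z, ystar n⟫ := by
          rw [hcdef, ← inner_add_left]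
          congr 1; abel
        linarith
      have hsq : ‖x (n + 1) - z‖ ^ 2
          = ‖x n - z‖ ^ 2 - 2 * t * ⟪x n - z, ystar n⟫ + t ^ 2 * ‖ystar n‖ ^ 2 := by
        rw [hupd_pos n hc]
        have harr : x n - t • ystar n - z = (x n - z) - t • ystar n := by abel
        rw [harr, norm_sub_sq_real, real_inner_smul_right, norm_smul, Real.norm_eq_abs, mul_pow, sq_abs]
        ring
      have h1 : t ^ 2 * ‖ystar n‖ ^ 2 = t * (lam n * c) := by rw [← hkey]; ring
      have h2 : t * (lam n * c) ≤ 2 * (t * c) := by nlinarith [mul_nonneg htpos hc.le]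
      have h3 : t * c ≤ t * ⟪x n - z, ystar n⟫ := mul_le_mul_of_nonneg_left hinner htpos
      have hle : ‖x (n + 1) - z‖ ^ 2 ≤ ‖x n - z‖ ^ 2 := by
        rw [hsq]; linarith
      exact le_of_pow_le_pow_left₀ two_ne_zero (norm_nonneg _) hle
    · rw [hupd_neg n hc]
  have hbd : ∀ n, ‖x n - z‖ ≤ ‖x 0 - z‖ := by
    intro n
    induction n with
    | zero => exact le_refl _
    | succ k ih => exact le_trans (key k) ih
  have hmem : ∀ n, x n ∈ Metric.closedBall z ‖x 0 - z‖ := by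
    intro n
    rw [Metric.mem_closedBall, dist_eq_norm]
    exact hbd n
  exact Metric.isBounded_closedBall.subset (Set.range_subset_iff.mpr hmem)
end

section
/- Under the stated setting, the sequence (x_n)_{n∈ℕ} generated by the iteration satisfies ∑_{n∈ℕ} ‖x_{n+1} − x_n‖² < +∞. -/
open Filter Topology RealInnerProductSpace

set_option maxHeartbeats 1000000 in
/-- Fact 1(i): `∑ ‖x_{n+1} − x_n‖² < ∞` for the warped proximal iteration. -/
theorem warped_proximal_summable
    {H : Type*} [NormedAddCommGroup H] [InnerProductSpace ℝ H] [CompleteSpace H]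
    (M : H → Set H) (hM : IsMaximalMonotone M) (hzer : ∃ z, (0 : H) ∈ M z)
    (ε α β : ℝ) (hε : ε ∈ Set.Ioo (0 : ℝ) 1) (hα : 0 < α) (hαβ : α ≤ β)
    (K : ℕ → H → H)
    (hKstrong : ∀ n x y, α * ‖x - y‖ ^ 2 ≤ ⟪x - y, K n x - K n y⟫)
    (hKlip : ∀ n x y, ‖K n x - K n y‖ ≤ β * ‖x - y‖)
    (lam : ℕ → ℝ) (hlam : ∀ n, lam n ∈ Set.Icc ε (2 - ε))
    (x xt y ystar : ℕ → H)
    (hy : ∀ n, K n (xt n) - K n (y n) ∈ M (y n))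
    (hystar : ∀ n, ystar n = K n (xt n) - K n (y n))
    (hupd_pos : ∀ n, 0 < ⟪x n - y n, ystar n⟫ →
      x (n + 1) = x n - ((lam n * ⟪x n - y n, ystar n⟫) / ‖ystar n‖ ^ 2) • ystar n)
    (hupd_neg : ∀ n, ¬ 0 < ⟪x n - y n, ystar n⟫ → x (n + 1) = x n) :
    Summable (fun n => ‖x (n + 1) - x n‖ ^ 2) := by
  obtain ⟨z, hz⟩ := hzer
  obtain ⟨hε0, hε1⟩ := hε
  set a : ℕ → ℝ := fun n => ‖x n - z‖ ^ 2 with ha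
  set C : ℝ := (2 - ε) / ε with hC
  have hC0 : 0 ≤ C := div_nonneg (by linarith) hε0.le
  have key : ∀ n, ‖x (n + 1) - x n‖ ^ 2 ≤ C * (a n - a (n + 1)) := by
    intro n
    by_cases hc : 0 < ⟪x n - y n, ystar n⟫
    · have hmono : 0 ≤ ⟪y n - z, ystar n - 0⟫ :=
        hM.1 (y n) z (ystar n) 0 (by rw [hystar]; exact hy n) hz
      rw [sub_zero] at hmono
      set c : ℝ := ⟪x n - y n, ystar n⟫ with hcdef
      set s : ℝ := ‖ystar n‖ ^ 2 with hsdef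
      have hs0 : 0 < s := by
        rcases eq_or_ne (ystar n) 0 with h0 | h0
        · exfalso
          rw [hcdef, h0, inner_zero_right] at hc
          exact lt_irrefl 0 hc
        · have := norm_pos_iff.mpr h0
          positivity
      obtain ⟨hl1, hl2⟩ := hlam n
      have hl0 : 0 < lam n := lt_of_lt_of_le hε0 hl1
      set t : ℝ := lam n * c / s with htdef
      have ht0 : 0 ≤ t := by positivity
      have hx1 : x (n + 1) = x n - t • ystar n := hupd_pos n hc
      have hdiff : x (n + 1) - x n = -(t • ystar n) := by rw [hx1]; abel
      have hnd : ‖x (n + 1) - x n‖ ^ 2 = t ^ 2 * s := by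
        rw [hdiff, norm_neg, norm_smul, Real.norm_eq_abs, mul_pow, sq_abs, hsdef]
      have hxz : x (n + 1) - z = (x n - z) - t • ystar n := by rw [hx1]; abel
      have expand : a (n + 1) = a n - 2 * (t * ⟪x n - z, ystar n⟫) + t ^ 2 * s := by
        have hsq := @norm_sub_sq_real H _ _ (x n - z) (t • ystar n)
        rw [ha]
        simp only
        rw [hxz, hsq, real_inner_smul_right, norm_smul, Real.norm_eq_abs, mul_pow, sq_abs,
          hsdef]
      have hinner : c ≤ ⟪x n - z, ystar n⟫ := by
        have hsplit : ⟪x n - z, ystar n⟫ = c + ⟪y n - z, ystar n⟫ := by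
          rw [hcdef, show x n - z = (x n - y n) + (y n - z) by abel, inner_add_left]
        rw [hsplit]; linarith
      have h1 : t ^ 2 * s = lam n ^ 2 * c ^ 2 / s := by
        rw [htdef]; field_simp
      have h2 : 2 * (t * c) - t ^ 2 * s = lam n * (2 - lam n) * c ^ 2 / s := by
        rw [htdef]; field_simp
      have hstep : a n - a (n + 1) ≥ lam n * (2 - lam n) * c ^ 2 / s := by
        rw [expand]
        have : 2 * (t * c) ≤ 2 * (t * ⟪x n - z, ystar n⟫) := by nlinarith
        linarith [h2]
      have hquot : 0 ≤ c ^ 2 / s := by positivity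
      have hkey2 : lam n ^ 2 * c ^ 2 / s ≤ C * (lam n * (2 - lam n) * c ^ 2 / s) := by
        have hlC : lam n ≤ C * (2 - lam n) := by
          have hCε : C * ε = 2 - ε := by
            rw [hC]; field_simp
          nlinarith
        have : lam n ^ 2 * (c ^ 2 / s) ≤ C * (lam n * (2 - lam n)) * (c ^ 2 / s) := by
          apply mul_le_mul_of_nonneg_right _ hquot
          nlinarith
        calc lam n ^ 2 * c ^ 2 / s = lam n ^ 2 * (c ^ 2 / s) := by ring
          _ ≤ C * (lam n * (2 - lam n)) * (c ^ 2 / s) := this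
          _ = C * (lam n * (2 - lam n) * c ^ 2 / s) := by ring
      have : C * (lam n * (2 - lam n) * c ^ 2 / s) ≤ C * (a n - a (n + 1)) :=
        mul_le_mul_of_nonneg_left hstep hC0
      rw [hnd, h1]
      linarith
    · have hx1 : x (n + 1) = x n := hupd_neg n hc
      simp [ha, hx1]
  apply summable_of_sum_range_le (c := C * a 0) (fun n => sq_nonneg _)
  intro n
  calc ∑ i ∈ Finset.range n, ‖x (i + 1) - x i‖ ^ 2
      ≤ ∑ i ∈ Finset.range n, C * (a i - a (i + 1)) :=
        Finset.sum_le_sum fun i _ => key i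
    _ = C * (a 0 - a n) := by rw [← Finset.mul_sum, Finset.sum_range_sub']
    _ ≤ C * a 0 := by
        have h0 : 0 ≤ a n := sq_nonneg _
        nlinarith
end

section
/- Under the stated setting, if in addition x̃_n − x_n → 0 strongly, then the sequence (x_n)_{n∈ℕ} generated by the iteration converges weakly to a point in zer M. -/
open Filter Topology RealInnerProductSpace

set_option maxHeartbeats 1000000 in
/-- Fact 1(ii): if `x̃_n − x_n → 0` strongly, then `(x_n)` converges weakly to a zero of `M`. -/
theorem warped_proximal_weak_convergence
    {H : Type*} [NormedAddCommGroup H] [InnerProductSpace ℝ H] [CompleteSpace H]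
    (M : H → Set H) (hM : IsMaximalMonotone M) (hzer : ∃ z, (0 : H) ∈ M z)
    (ε α β : ℝ) (hε : ε ∈ Set.Ioo (0 : ℝ) 1) (hα : 0 < α) (hαβ : α ≤ β)
    (K : ℕ → H → H)
    (hKstrong : ∀ n x y, α * ‖x - y‖ ^ 2 ≤ ⟪x - y, K n x - K n y⟫)
    (hKlip : ∀ n x y, ‖K n x - K n y‖ ≤ β * ‖x - y‖)
    (lam : ℕ → ℝ) (hlam : ∀ n, lam n ∈ Set.Icc ε (2 - ε))
    (x xt y ystar : ℕ → H)
    (hy : ∀ n, K n (xt n) - K n (y n) ∈ M (y n))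
    (hystar : ∀ n, ystar n = K n (xt n) - K n (y n))
    (hupd_pos : ∀ n, 0 < ⟪x n - y n, ystar n⟫ →
      x (n + 1) = x n - ((lam n * ⟪x n - y n, ystar n⟫) / ‖ystar n‖ ^ 2) • ystar n)
    (hupd_neg : ∀ n, ¬ 0 < ⟪x n - y n, ystar n⟫ → x (n + 1) = x n) :
    Filter.Tendsto (fun n => xt n - x n) Filter.atTop (nhds 0) →
    ∃ p, (0 : H) ∈ M p ∧
      ∀ w : H, Filter.Tendsto (fun n => ⟪x n, w⟫) Filter.atTop (nhds ⟪p, w⟫) := by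
  intro hxt
  obtain ⟨hε0, hε1⟩ := hε
  obtain ⟨z₀, hz₀⟩ := hzer
  set t : ℕ → ℝ := fun n => max ⟪x n - y n, ystar n⟫ 0 with ht
  have htnn : ∀ n, 0 ≤ t n := fun n => le_max_right _ _
  have hysmem : ∀ n, ystar n ∈ M (y n) := fun n => (hystar n) ▸ hy n
  -- λ(2-λ) ≥ ε²
  have hlamsq : ∀ n, ε ^ 2 + (lam n) ^ 2 ≤ 2 * lam n := by
    intro n
    obtain ⟨h1, h2⟩ := hlam n
    nlinarith [mul_nonneg (sub_nonneg.2 h1) (sub_nonneg.2 h2)]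
  -- Key Fejér inequality
  have key : ∀ z, (0 : H) ∈ M z → ∀ n,
      ‖x (n + 1) - z‖ ^ 2 + ε ^ 2 * (t n) ^ 2 / ‖ystar n‖ ^ 2 ≤ ‖x n - z‖ ^ 2 := by
    intro z hz n
    by_cases hpos : 0 < ⟪x n - y n, ystar n⟫
    · have hys : ystar n ≠ 0 := by
        intro h
        rw [h, inner_zero_right] at hpos
        exact lt_irrefl _ hpos
      have hd : (0 : ℝ) < ‖ystar n‖ ^ 2 := by
        have := norm_pos_iff.2 hys
        positivity
      set c : ℝ := ⟪x n - y n, ystar n⟫ with hc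
      have htc : t n = c := max_eq_left hpos.le
      have hmono := hM.1 (y n) z (ystar n) 0 (hysmem n) hz
      rw [sub_zero] at hmono
      have hge : c ≤ ⟪x n - z, ystar n⟫ := by
        have hxz : x n - z = (x n - y n) + (y n - z) := by abel
        rw [hxz, inner_add_left]
        linarith
      rw [hupd_pos n hpos]
      have hexp : ‖(x n - ((lam n * c) / ‖ystar n‖ ^ 2) • ystar n) - z‖ ^ 2
          = ‖x n - z‖ ^ 2 - 2 * ((lam n * c) / ‖ystar n‖ ^ 2) * ⟪x n - z, ystar n⟫
            + ((lam n * c) / ‖ystar n‖ ^ 2) ^ 2 * ‖ystar n‖ ^ 2 := by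
        have h1 : (x n - ((lam n * c) / ‖ystar n‖ ^ 2) • ystar n) - z
            = (x n - z) - ((lam n * c) / ‖ystar n‖ ^ 2) • ystar n := by abel
        rw [h1, norm_sub_sq_real, real_inner_smul_right, norm_smul, Real.norm_eq_abs,
          mul_pow, sq_abs]
        ring
      rw [hexp, htc]
      set r : ℝ := c / ‖ystar n‖ ^ 2 with hr
      have hrpos : 0 < r := div_pos hpos hd
      have hrd : r * ‖ystar n‖ ^ 2 = c := div_mul_cancel₀ _ hd.ne'
      have hmu : (lam n * c) / ‖ystar n‖ ^ 2 = lam n * r := by rw [hr]; ring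
      have hcd : ε ^ 2 * c ^ 2 / ‖ystar n‖ ^ 2 = ε ^ 2 * r * c := by
        rw [hr]; field_simp
      rw [hmu, hcd]
      obtain ⟨hl1, hl2⟩ := hlam n
      have hlpos : 0 < lam n := lt_of_lt_of_le hε0 hl1
      have hIge : 2 * (lam n * r) * c ≤ 2 * (lam n * r) * ⟪x n - z, ystar n⟫ :=
        mul_le_mul_of_nonneg_left hge (by positivity)
      have e1 : ε ^ 2 * r * c = ε ^ 2 * (r * r * ‖ystar n‖ ^ 2) := by rw [← hrd]; ring
      have e2 : (lam n * r) ^ 2 * ‖ystar n‖ ^ 2 = lam n ^ 2 * (r * r * ‖ystar n‖ ^ 2) := by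
        ring
      have e3 : 2 * (lam n * r) * c = 2 * lam n * (r * r * ‖ystar n‖ ^ 2) := by
        rw [← hrd]; ring
      have e4 : 0 ≤ (2 * lam n - ε ^ 2 - lam n ^ 2) * (r * r * ‖ystar n‖ ^ 2) :=
        mul_nonneg (by linarith [hlamsq n]) (by positivity)
      nlinarith [hIge, e1, e2, e3, e4]
    · have ht0 : t n = 0 := max_eq_right (not_lt.1 hpos)
      rw [hupd_neg n hpos, ht0]
      simp
  have hterm_nn : ∀ n, 0 ≤ ε ^ 2 * (t n) ^ 2 / ‖ystar n‖ ^ 2 := by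
    intro n; positivity
  have hanti : ∀ z, (0 : H) ∈ M z → Antitone (fun n => ‖x n - z‖ ^ 2) := by
    intro z hz
    apply antitone_nat_of_succ_le
    intro n
    have h1 := key z hz n
    have h2 := hterm_nn n
    show ‖x (n + 1) - z‖ ^ 2 ≤ ‖x n - z‖ ^ 2
    linarith
  have hlimz : ∀ z, (0 : H) ∈ M z →
      ∃ L, Tendsto (fun n => ‖x n - z‖ ^ 2) atTop (𝓝 L) := by
    intro z hz
    exact ⟨_, tendsto_atTop_ciInf (hanti z hz)
      ⟨0, by rintro _ ⟨n, rfl⟩; positivity⟩⟩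
  -- boundedness of x
  set R : ℝ := ‖x 0 - z₀‖ + ‖z₀‖ with hR
  have hxb : ∀ n, ‖x n‖ ≤ R := by
    intro n
    have h1 : ‖x n - z₀‖ ^ 2 ≤ ‖x 0 - z₀‖ ^ 2 := hanti z₀ hz₀ (Nat.zero_le n)
    have h2 : ‖x n - z₀‖ ≤ ‖x 0 - z₀‖ := by
      nlinarith [norm_nonneg (x n - z₀), norm_nonneg (x 0 - z₀)]
    have h3 : x n = (x n - z₀) + z₀ := by abel
    calc ‖x n‖ = ‖(x n - z₀) + z₀‖ := by rw [← h3]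
    _ ≤ ‖x n - z₀‖ + ‖z₀‖ := norm_add_le _ _
    _ ≤ R := by rw [hR]; linarith
  -- the residual s_n = t n / ‖ystar n‖ tends to 0
  obtain ⟨L₀, hL₀⟩ := hlimz z₀ hz₀
  have hshift : Tendsto (fun n => ‖x (n + 1) - z₀‖ ^ 2) atTop (𝓝 L₀) :=
    hL₀.comp (tendsto_add_atTop_nat 1)
  have hdiff : Tendsto (fun n => ‖x n - z₀‖ ^ 2 - ‖x (n + 1) - z₀‖ ^ 2) atTop (𝓝 0) := by
    have := hL₀.sub hshift
    simpa using this
  have hsq : Tendsto (fun n => (t n) ^ 2 / ‖ystar n‖ ^ 2) atTop (𝓝 0) := by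
    apply squeeze_zero (g := fun n => (‖x n - z₀‖ ^ 2 - ‖x (n + 1) - z₀‖ ^ 2) / ε ^ 2)
      (fun n => by positivity)
    · intro n
      rw [le_div_iff₀ (by positivity : (0:ℝ) < ε ^ 2)]
      calc (t n) ^ 2 / ‖ystar n‖ ^ 2 * ε ^ 2 = ε ^ 2 * (t n) ^ 2 / ‖ystar n‖ ^ 2 := by
            ring
      _ ≤ ‖x n - z₀‖ ^ 2 - ‖x (n + 1) - z₀‖ ^ 2 := by linarith [key z₀ hz₀ n]
    · simpa using hdiff.div_const (ε ^ 2)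
  have hs : Tendsto (fun n => t n / ‖ystar n‖) atTop (𝓝 0) := by
    have hsqrt : Tendsto (fun n => Real.sqrt ((t n) ^ 2 / ‖ystar n‖ ^ 2)) atTop (𝓝 0) := by
      have := hsq.sqrt
      simpa using this
    apply hsqrt.congr
    intro n
    rw [← div_pow, Real.sqrt_sq (by positivity)]
  have hsnn : ∀ n, 0 ≤ t n / ‖ystar n‖ := fun n => by positivity
  -- ‖xt n - y n‖ → 0
  have htleq : ∀ n, t n ≤ (t n / ‖ystar n‖) * ‖ystar n‖ := by
    intro n
    rcases eq_or_ne (‖ystar n‖) 0 with h0 | h0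
    · have hy0 : ystar n = 0 := norm_eq_zero.1 h0
      have : t n = 0 := by
        rw [ht]
        simp [hy0]
      rw [this, h0]
      simp
    · rw [div_mul_cancel₀ _ h0]
  have htyb : ∀ n, ‖xt n - y n‖ ≤ (β / α) * (t n / ‖ystar n‖ + ‖xt n - x n‖) := by
    intro n
    have h1 : α * ‖xt n - y n‖ ^ 2 ≤ ⟪xt n - y n, ystar n⟫ := by
      rw [hystar]
      exact hKstrong n _ _
    have h2 : ⟪xt n - y n, ystar n⟫ = ⟪x n - y n, ystar n⟫ + ⟪xt n - x n, ystar n⟫ := by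
      rw [← inner_add_left]
      congr 1
      abel
    have h3 : ⟪x n - y n, ystar n⟫ ≤ t n := le_max_left _ _
    have h4 : ⟪xt n - x n, ystar n⟫ ≤ ‖xt n - x n‖ * ‖ystar n‖ := real_inner_le_norm _ _
    have h6 : ‖ystar n‖ ≤ β * ‖xt n - y n‖ := by
      rw [hystar]
      exact hKlip n _ _
    have h7 : α * ‖xt n - y n‖ ^ 2
        ≤ (t n / ‖ystar n‖ + ‖xt n - x n‖) * ‖ystar n‖ := by
      have := htleq n
      nlinarith [h1, h2, h3, h4]
    have h8 : α * ‖xt n - y n‖ ^ 2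
        ≤ (t n / ‖ystar n‖ + ‖xt n - x n‖) * (β * ‖xt n - y n‖) := by
      have hc0 : 0 ≤ t n / ‖ystar n‖ + ‖xt n - x n‖ := add_nonneg (hsnn n) (norm_nonneg _)
      exact h7.trans (mul_le_mul_of_nonneg_left h6 hc0)
    rw [div_mul_eq_mul_div, le_div_iff₀ hα]
    rcases eq_or_lt_of_le (norm_nonneg (xt n - y n)) with hq0 | hq0
    · rw [← hq0]
      have h9 := hsnn n
      have h10 := norm_nonneg (xt n - x n)
      have hβ : 0 < β := lt_of_lt_of_le hα hαβ
      calc (0:ℝ) * α = 0 := zero_mul α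
      _ ≤ β * (t n / ‖ystar n‖ + ‖xt n - x n‖) := mul_nonneg hβ.le (add_nonneg h9 h10)
    · nlinarith [h8, hq0]
  have hxtx : Tendsto (fun n => ‖xt n - x n‖) atTop (𝓝 0) := by
    have := hxt.norm
    simpa using this
  have hty : Tendsto (fun n => ‖xt n - y n‖) atTop (𝓝 0) := by
    apply squeeze_zero (fun n => norm_nonneg _) htyb
    have := (hs.add hxtx).const_mul (β / α)
    simpa using this
  have hyx : Tendsto (fun n => y n - x n) atTop (𝓝 0) := by
    have h1 : Tendsto (fun n => y n - xt n) atTop (𝓝 0) := by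
      rw [tendsto_zero_iff_norm_tendsto_zero]
      apply hty.congr
      intro n
      rw [norm_sub_rev]
    have := h1.add hxt
    simpa using this
  have hysn : Tendsto (fun n => ‖ystar n‖) atTop (𝓝 0) := by
    apply squeeze_zero (fun n => norm_nonneg _) (g := fun n => β * ‖xt n - y n‖)
    · intro n
      rw [hystar]
      exact hKlip n _ _
    · have := hty.const_mul β
      simpa using this
  -- main: every ultrafilter finer than atTop yields a weak cluster point in zer M
  have main : ∀ U : Ultrafilter ℕ, ↑U ≤ (atTop : Filter ℕ) →
      ∃ p, (0 : H) ∈ M p ∧ ∀ w : H, Tendsto (fun n => ⟪x n, w⟫) ↑U (𝓝 ⟪p, w⟫) := by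
    intro U hU
    have hexlim : ∀ w : H, ∃ c, Tendsto (fun n => ⟪x n, w⟫) ↑U (𝓝 c) := by
      intro w
      have hcomp : IsCompact (Set.Icc (-(R * ‖w‖)) (R * ‖w‖)) := isCompact_Icc
      have hmem : ↑(U.map (fun n => ⟪x n, w⟫)) ≤ 𝓟 (Set.Icc (-(R * ‖w‖)) (R * ‖w‖)) := by
        rw [Ultrafilter.coe_map]
        refine Filter.le_principal_iff.2 (Filter.mem_map.2 (Filter.univ_mem' ?_))
        intro n
        have hb : |⟪x n, w⟫| ≤ R * ‖w‖ := by
          refine (abs_real_inner_le_norm _ _).trans ?_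
          exact mul_le_mul_of_nonneg_right (hxb n) (norm_nonneg w)
        exact Set.mem_Icc.2 (abs_le.1 hb)
      obtain ⟨c, _, hc⟩ := hcomp.ultrafilter_le_nhds _ hmem
      refine ⟨c, ?_⟩
      rwa [Filter.Tendsto, ← Ultrafilter.coe_map]
    choose flim hflim using hexlim
    have hadd : ∀ w₁ w₂, flim (w₁ + w₂) = flim w₁ + flim w₂ := by
      intro w₁ w₂
      refine tendsto_nhds_unique (hflim (w₁ + w₂)) ?_
      have := (hflim w₁).add (hflim w₂)
      apply this.congr
      intro n
      rw [inner_add_right]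
    have hsmul : ∀ (r : ℝ) w, flim (r • w) = r * flim w := by
      intro r w
      refine tendsto_nhds_unique (hflim (r • w)) ?_
      have := (hflim w).const_mul r
      apply this.congr
      intro n
      rw [real_inner_smul_right]
    have hnormb : ∀ w, |flim w| ≤ R * ‖w‖ := by
      intro w
      refine le_of_tendsto (hflim w).abs (Filter.Eventually.of_forall fun n => ?_)
      refine (abs_real_inner_le_norm _ _).trans ?_
      exact mul_le_mul_of_nonneg_right (hxb n) (norm_nonneg w)
    let F : H →ₗ[ℝ] ℝ :=
      { toFun := flim, map_add' := hadd, map_smul' := hsmul }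
    let Fc : H →L[ℝ] ℝ := LinearMap.mkContinuous F R
      (fun w => by simpa [F, Real.norm_eq_abs] using hnormb w)
    set p : H := (InnerProductSpace.toDual ℝ H).symm Fc with hp
    have hpw : ∀ w, ⟪p, w⟫ = flim w := by
      intro w
      rw [hp]
      exact InnerProductSpace.toDual_symm_apply
    have hxp : ∀ w, Tendsto (fun n => ⟪x n, w⟫) ↑U (𝓝 ⟪p, w⟫) := by
      intro w
      rw [hpw w]
      exact hflim w
    -- demiclosedness
    have hkey : ∀ u v, v ∈ M u → 0 ≤ ⟪p - u, (0 : H) - v⟫ := by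
      intro u v hv
      have hA : Tendsto (fun n => ⟪y n - u, ystar n⟫) atTop (𝓝 0) := by
        have hb : ∀ n, |⟪y n - u, ystar n⟫| ≤ (‖y n - x n‖ + R + ‖u‖) * ‖ystar n‖ := by
          intro n
          refine (abs_real_inner_le_norm _ _).trans ?_
          refine mul_le_mul_of_nonneg_right ?_ (norm_nonneg _)
          have h1 : y n - u = (y n - x n) + x n + (-u) := by abel
          calc ‖y n - u‖ = ‖(y n - x n) + x n + (-u)‖ := by rw [← h1]
          _ ≤ ‖(y n - x n) + x n‖ + ‖-u‖ := norm_add_le _ _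
          _ ≤ ‖y n - x n‖ + ‖x n‖ + ‖u‖ := by
              rw [norm_neg]
              have := norm_add_le (y n - x n) (x n)
              linarith
          _ ≤ ‖y n - x n‖ + R + ‖u‖ := by linarith [hxb n]
        rw [tendsto_zero_iff_abs_tendsto_zero]
        apply squeeze_zero (fun n => abs_nonneg _) hb
        have hnyx : Tendsto (fun n => ‖y n - x n‖) atTop (𝓝 0) := by
          have := hyx.norm
          simpa using this
        have := ((hnyx.add_const R).add_const ‖u‖).mul hysn
        simpa using this
      have hB : Tendsto (fun n => ⟪y n - x n, v⟫) atTop (𝓝 0) := by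
        have := Filter.Tendsto.inner (𝕜 := ℝ) hyx (tendsto_const_nhds (x := v))
        simpa using this
      have heq : ∀ n, ⟪y n - u, ystar n - v⟫
          = ⟪y n - u, ystar n⟫ - ⟪y n - x n, v⟫ - ⟪x n, v⟫ + ⟪u, v⟫ := by
        intro n
        simp only [inner_sub_left, inner_sub_right]
        ring
      have hTend : Tendsto (fun n => ⟪y n - u, ystar n - v⟫) ↑U
          (𝓝 (0 - 0 - ⟪p, v⟫ + ⟪u, v⟫)) := by
        refine Tendsto.congr (fun n => (heq n).symm) ?_
        exact (((hA.mono_left hU).sub (hB.mono_left hU)).sub (hxp v)).add_const _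
      have hlim0 : 0 ≤ 0 - 0 - ⟪p, v⟫ + ⟪u, v⟫ := by
        refine ge_of_tendsto hTend (Filter.Eventually.of_forall fun n => ?_)
        exact hM.1 (y n) u (ystar n) v (hysmem n) hv
      have : ⟪p - u, (0 : H) - v⟫ = 0 - 0 - ⟪p, v⟫ + ⟪u, v⟫ := by
        simp only [inner_sub_left, inner_sub_right, inner_zero_right]
        ring
      rw [this]
      exact hlim0
    have hp0 : (0 : H) ∈ M p := by
      set M' : H → Set H := fun q => M q ∪ {w | q = p ∧ w = 0} with hM'
      have hM'mono : IsMonotoneOp M' := by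
        rintro a b u v hu hv
        rcases hu with hu | ⟨hap, hu0⟩
        · rcases hv with hv | ⟨hbp, hv0⟩
          · exact hM.1 _ _ _ _ hu hv
          · subst hbp; subst hv0
            have := hkey a u hu
            have h1 : a - p = -(p - a) := by abel
            have h2 : u - 0 = -((0 : H) - u) := by abel
            rw [h1, h2, inner_neg_neg]
            exact this
        · subst hap; subst hu0
          rcases hv with hv | ⟨hbp, hv0⟩
          · exact hkey b v hv
          · subst hbp; subst hv0
            simp
      have hsub := hM.2 M' hM'mono (fun q w hw => Or.inl hw) p
      exact hsub (Or.inr ⟨rfl, rfl⟩)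
    exact ⟨p, hp0, hxp⟩
  -- conclusion
  obtain ⟨p, hp0, hpw⟩ := main (Ultrafilter.of atTop) (Ultrafilter.of_le _)
  refine ⟨p, hp0, fun w => ?_⟩
  rw [tendsto_iff_ultrafilter]
  intro V hV
  obtain ⟨q, hq0, hqw⟩ := main V hV
  have hqp : q = p := by
    obtain ⟨Lp, hLp⟩ := hlimz p hp0
    obtain ⟨Lq, hLq⟩ := hlimz q hq0
    have hc : Tendsto (fun n => ⟪x n, p - q⟫) atTop
        (𝓝 ((Lq - Lp + ‖p‖ ^ 2 - ‖q‖ ^ 2) / 2)) := by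
      have heq : ∀ n, ⟪x n, p - q⟫
          = (‖x n - q‖ ^ 2 - ‖x n - p‖ ^ 2 + ‖p‖ ^ 2 - ‖q‖ ^ 2) / 2 := by
        intro n
        rw [norm_sub_sq_real, norm_sub_sq_real, inner_sub_right]
        ring
      refine Tendsto.congr (fun n => (heq n).symm) ?_
      exact (((hLq.sub hLp).add_const (‖p‖ ^ 2)).sub_const (‖q‖ ^ 2)).div_const 2
    have h1 : ⟪p, p - q⟫ = (Lq - Lp + ‖p‖ ^ 2 - ‖q‖ ^ 2) / 2 :=
      tendsto_nhds_unique (hpw (p - q)) (hc.mono_left (Ultrafilter.of_le _))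
    have h2 : ⟪q, p - q⟫ = (Lq - Lp + ‖p‖ ^ 2 - ‖q‖ ^ 2) / 2 :=
      tendsto_nhds_unique (hqw (p - q)) (hc.mono_left hV)
    have h3 : ⟪p - q, p - q⟫ = (0 : ℝ) := by
      rw [inner_sub_left, h1, h2]
      ring
    have h4 : p - q = 0 := inner_self_eq_zero.1 h3
    have : p = q := by
      have := sub_eq_zero.1 h4
      exact this
    exact this.symm
  rw [← hqp]
  exact hqw w
end
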